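/- arXiv:2105.02631 — 2 statements merged into one kernel-verified Lean document; each statement's English description precedes it below -/
import Mathlib

section
/- Let K > 1, r > 0, t > 0 be real numbers and λ ∈ ℂ with Re λ > 0 and (Im λ)² ≥ (Re λ)/K. If |λ|·sinh r ≤ t ≤ |λ|·cosh r, then min(t, 2π·(Re λ)·cosh r·sinh r / t) ≥ (Re λ)·sinh r / (K·|λ|). -/
/-- For `K > 1`, `r, t > 0`, `λ ∈ ℂ` with `Re λ > 0` and `(Im λ)² ≥ (Re λ)/K`: if
`|λ|·sinh r ≤ t ≤ |λ|·cosh r`, then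
`min(t, 2π·(Re λ)·cosh r·sinh r / t) ≥ (Re λ)·sinh r / (K·|λ|)`. -/
theorem injectivity_radius_lower_bound (K r t : ℝ) (hK : 1 < K) (hr : 0 < r) (ht : 0 < t)
    (lam : ℂ) (hRe : 0 < lam.re) (hIm : lam.re / K ≤ lam.im ^ 2)
    (h1 : ‖lam‖ * Real.sinh r ≤ t) (h2 : t ≤ ‖lam‖ * Real.cosh r) :
    lam.re * Real.sinh r / (K * ‖lam‖) ≤
      min t (2 * Real.pi * lam.re * Real.cosh r * Real.sinh r / t) := by
  have hK0 : (0:ℝ) < K := lt_trans one_pos hK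
  have ha : 0 < ‖lam‖ := by
    apply norm_pos_iff.mpr
    intro h
    rw [h] at hRe
    simp at hRe
  have hsq : ‖lam‖ ^ 2 = lam.re ^ 2 + lam.im ^ 2 := by
    rw [Complex.sq_norm, Complex.normSq_apply]; ring
  have hkey : lam.re ≤ K * ‖lam‖ ^ 2 := by
    have := (div_le_iff₀ hK0).mp hIm
    nlinarith [sq_nonneg lam.re]
  have hs : 0 < Real.sinh r := by positivity
  have hc : 0 < Real.cosh r := Real.cosh_pos r
  have hpi : (3:ℝ) ≤ Real.pi := by linarith [Real.pi_gt_three]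
  refine le_min ?_ ?_
  · have : lam.re * Real.sinh r / (K * ‖lam‖) ≤ ‖lam‖ * Real.sinh r := by
      rw [div_le_iff₀ (by positivity)]
      nlinarith
    linarith
  · rw [div_le_div_iff₀ (by positivity) ht]
    have h3 : lam.re * Real.sinh r * t ≤
        lam.re * Real.sinh r * (‖lam‖ * Real.cosh r) := mul_le_mul_of_nonneg_left h2 (by positivity)
    have h4 : (1:ℝ) ≤ 2 * Real.pi * K := by nlinarith
    nlinarith [h3, h4, mul_nonneg (mul_nonneg (mul_nonneg hRe.le hs.le) ha.le) hc.le]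
end

section
/- Let K > 1, r > 0, t > 0 be real numbers and λ, ω ∈ ℂ with ω ≠ 0, Re λ > 0, and (Im λ)² ≥ (Re λ)/K. Suppose t·|ω| = 2π·sinh r and i·t·|ω|/ω = (Re λ)·cosh r + i·(Im λ)·sinh r. Then every nonzero vector of the lattice ℤ·t + ℤ·(tω) ⊂ ℂ has modulus at least (Re λ)·sinh r / (K·|λ|); that is, for all integers (m, n) ≠ (0, 0), |t·(m + n·ω)| ≥ (Re λ)·sinh r / (K·|λ|). -/
set_option maxHeartbeats 4000000


/-- Under the tube-boundary equations `t·|ω| = 2π·sinh r` and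
`i·t·|ω|/ω = (Re λ)·cosh r + i·(Im λ)·sinh r`, with `K > 1`, `r, t > 0`, `ω ≠ 0`,
`Re λ > 0` and `(Im λ)² ≥ (Re λ)/K`, every nonzero vector of the lattice
`ℤ·t + ℤ·(t·ω)` has modulus at least `(Re λ)·sinh r / (K·|λ|)`. -/
theorem systole_lower_bound (K r t : ℝ) (hK : 1 < K) (hr : 0 < r) (ht : 0 < t)
    (lam ω : ℂ) (hω : ω ≠ 0) (hRe : 0 < lam.re) (hIm : lam.re / K ≤ lam.im ^ 2)
    (h1 : t * ‖ω‖ = 2 * Real.pi * Real.sinh r)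
    (h2 : Complex.I * (t : ℂ) * (‖ω‖ : ℂ) / ω =
        ((lam.re * Real.cosh r : ℝ) : ℂ) + Complex.I * ((lam.im * Real.sinh r : ℝ) : ℂ)) :
    ∀ m n : ℤ, (m, n) ≠ (0, 0) →
      lam.re * Real.sinh r / (K * ‖lam‖) ≤
        ‖(t : ℂ) * ((m : ℂ) + (n : ℂ) * ω)‖ := by
  intro m n hmn
  have hK0 : (0:ℝ) < K := lt_trans one_pos hK
  set a := lam.re with ha
  set b := lam.im with hb
  set s := Real.sinh r with hsdef
  set c := Real.cosh r with hcdef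
  have hs : 0 < s := Real.sinh_pos_iff.2 hr
  have hc : 0 < c := Real.cosh_pos r
  have hsc : s ≤ c := by
    have hcs : c - s = Real.exp (-r) := by
      rw [hcdef, hsdef, Real.cosh_eq, Real.sinh_eq]; ring
    nlinarith [Real.exp_pos (-r)]
  set w := ‖ω‖ with hwdef
  have hw : 0 < w := norm_pos_iff.mpr hω
  have hlam0 : lam ≠ 0 := by
    intro h
    have : lam.re = 0 := by rw [h]; simp
    rw [← ha] at this
    linarith
  set L := ‖lam‖ with hLdef
  have hL : 0 < L := norm_pos_iff.mpr hlam0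
  have hL2 : L ^ 2 = a ^ 2 + b ^ 2 := by
    rw [hLdef, Complex.sq_norm, Complex.normSq_apply]; ring
  have hab : a ≤ K * b ^ 2 := (div_le_iff₀' hK0).mp hIm
  -- multiply h2 through by ω
  have h3 : Complex.I * (t:ℂ) * (w:ℂ) =
      (((a*c : ℝ):ℂ) + Complex.I * ((b*s:ℝ):ℂ)) * ω := by
    field_simp at h2
    push_cast at h2 ⊢
    linear_combination h2
  set x := ω.re with hx
  set y := ω.im with hy
  have hxy : x ^ 2 + y ^ 2 = w ^ 2 := by
    rw [hwdef, Complex.sq_norm, Complex.normSq_apply]; ring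
  have e1 : a*c*x - b*s*y = 0 := by
    have := congrArg Complex.re h3
    simp [Complex.mul_re, Complex.mul_im, Complex.add_re, Complex.add_im] at this
    linarith [this]
  have e2 : a*c*y + b*s*x = t*w := by
    have := congrArg Complex.im h3
    simp [Complex.mul_re, Complex.mul_im, Complex.add_re, Complex.add_im] at this
    linarith [this]
  have ht2 : t ^ 2 = (a*c) ^ 2 + (b*s) ^ 2 := by
    have key : t^2 * w^2 = ((a*c)^2 + (b*s)^2) * (x^2 + y^2) := by
      linear_combination (-(t*w) - a*c*y - b*s*x) * e2 - (a*c*x - b*s*y) * e1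
    rw [hxy] at key
    exact mul_right_cancel₀ (by positivity : (w:ℝ)^2 ≠ 0) key
  have ey : y * t ^ 2 = a * c * (t * w) := by
    rw [ht2]
    linear_combination (a*c) * e2 - (b*s) * e1
  have hty : t * y = a * c * w := by
    have : t * (t * y) = t * (a * c * w) := by nlinarith [ey]
    exact mul_left_cancel₀ (ne_of_gt ht) this
  rcases eq_or_ne n 0 with hn | hn
  · -- n = 0, m ≠ 0
    have hm : m ≠ 0 := by
      intro h; exact hmn (by simp [h, hn])
    have hm1 : (1:ℝ) ≤ |(m:ℝ)| := by
      rw [← Int.cast_abs]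
      exact_mod_cast Int.one_le_abs hm
    have hnc : ((n:ℂ)) = 0 := by rw [hn]; simp
    have habs : ‖(t : ℂ) * ((m : ℂ) + (n : ℂ) * ω)‖ = t * |(m:ℝ)| := by
      rw [hnc, zero_mul, add_zero]
      rw [show ((t:ℂ) * (m:ℂ)) = (((t * (m:ℝ)) : ℝ) : ℂ) by push_cast; ring]
      rw [Complex.norm_real, Real.norm_eq_abs, abs_mul, abs_of_pos ht]
    rw [habs]
    have hts : s * L ≤ t := by
      have h5 : s^2 * L^2 ≤ t^2 := by
        rw [ht2, hL2]
        nlinarith [mul_le_mul hsc hsc hs.le hc.le, sq_nonneg a]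
      nlinarith [h5, mul_pos hs hL]
    have step1 : a * s / (K * L) ≤ t := by
      rw [div_le_iff₀ (by positivity)]
      have i1 : a * s ≤ K * b^2 * s := mul_le_mul_of_nonneg_right hab hs.le
      have i2 : K * b^2 * s ≤ K * L^2 * s := by
        rw [hL2]; nlinarith [sq_nonneg a, hs.le, hK0.le,
          mul_nonneg (mul_nonneg hK0.le (sq_nonneg a)) hs.le]
      have i3 : (K * L) * (s * L) ≤ (K * L) * t :=
        mul_le_mul_of_nonneg_left hts (by positivity)
      nlinarith [i1, i2, i3]
    have step2 : t ≤ t * |(m:ℝ)| := le_mul_of_one_le_right ht.le hm1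
    linarith
  · -- n ≠ 0
    have hn1 : (1:ℝ) ≤ |(n:ℝ)| := by
      rw [← Int.cast_abs]
      exact_mod_cast Int.one_le_abs hn
    have him : ((t : ℂ) * ((m : ℂ) + (n : ℂ) * ω)).im = t * (n * y) := by
      simp only [Complex.mul_im, Complex.mul_re, Complex.add_im, Complex.add_re,
        Complex.ofReal_re, Complex.ofReal_im, Complex.intCast_re, Complex.intCast_im,
        ← hx, ← hy]
      ring
    have hy0 : 0 < y := by nlinarith [hty, mul_pos (mul_pos hRe hc) hw]
    have habs : t * |(n:ℝ)| * y ≤ ‖(t : ℂ) * ((m : ℂ) + (n : ℂ) * ω)‖ := by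
      have := Complex.abs_im_le_norm ((t : ℂ) * ((m : ℂ) + (n : ℂ) * ω))
      rw [him] at this
      calc t * |(n:ℝ)| * y = |t * (n * y)| := by
            rw [abs_mul, abs_mul, abs_of_pos ht, abs_of_pos hy0]; ring
        _ ≤ _ := this
    have key : a * s / (K * L) ≤ t * y := by
      rw [hty, div_le_iff₀ (by positivity)]
      -- a*s ≤ a*c*w*(K*L), with t*w = 2πs and t ≤ c*L, 1 ≤ 2πK
      have htcL : t ≤ c * L := by
        have h5 : t^2 ≤ c^2 * L^2 := by
          rw [ht2, hL2]
          nlinarith [mul_le_mul hsc hsc hs.le hc.le, sq_nonneg b]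
        nlinarith [h5, mul_pos hc hL]
      have hpi : (1:ℝ) ≤ 2 * Real.pi * K := by
        nlinarith [Real.pi_gt_three]
      -- from h1 : t * w = 2 π s
      -- want: a*s ≤ a*c*w*(K*L) i.e. a*s*t ≤ a*c*(2πs)*(K*L)
      have h4 : a * s * t ≤ a * c * w * (K * L) * t := by
        have i1 : a * s * t ≤ a * s * (c * L) :=
          mul_le_mul_of_nonneg_left htcL (by positivity)
        have i2 : a * s * (c * L) ≤ a * s * (c * L) * (2 * Real.pi * K) :=
          le_mul_of_one_le_right (by positivity) hpi
        have i3 : a * s * (c * L) * (2 * Real.pi * K) = a * c * (2 * Real.pi * s) * (K * L) := by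
          ring
        have i4 : a * c * (2 * Real.pi * s) * (K * L) = a * c * w * (K * L) * t := by
          rw [← h1]; ring
        linarith
      have h8 : (a * s) * t ≤ (a * c * w * (K * L)) * t := by linarith
      exact le_of_mul_le_mul_right h8 ht
    have h7 : t ≤ t * |(n:ℝ)| := le_mul_of_one_le_right ht.le hn1
    have h6 : t * y ≤ t * |(n:ℝ)| * y := mul_le_mul_of_nonneg_right h7 hy0.le
    linarith
end
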